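/- Every club (closed and unbounded) proper class of ordinals that is Σ_n definable without parameters contains the class C^(n); that is, if 𝒞 is a Σ_n definable club proper class of ordinals and α ∈ C^(n), then α ∈ 𝒞. -/

import Mathlib

/-!  Common framework: the language of set theory, Lévy hierarchy,
Σₙ-elementarity of classes of `ZFSet`s, cumulative hierarchy, etc. -/

open FirstOrder

/-- The language of set theory: a single binary relation symbol (membership). -/
def LSet : FirstOrder.Language where
  Functions _ := Empty
  Relations n := match n with
    | 2 => Unit
    | _ => Empty

/-- `V` (the universe of ZFC sets) as an `LSet`-structure. -/
noncomputable instance : LSet.Structure ZFSet where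
  funMap := fun f _ => f.elim
  RelMap := fun {n} r xs => match n, r, xs with
    | 2, _, xs => xs 0 ∈ xs 1
    | 0, r, _ => r.elim
    | 1, r, _ => r.elim
    | _+3, r, _ => r.elim

/-- Any class of sets as an `LSet`-structure, with the inherited membership relation. -/
noncomputable instance (S : Set ZFSet) : LSet.Structure S where
  funMap := fun f _ => f.elim
  RelMap := fun {n} r xs => match n, r, xs with
    | 2, _, xs => (xs 0 : ZFSet) ∈ (xs 1 : ZFSet)
    | 0, r, _ => r.elim
    | 1, r, _ => r.elim
    | _+3, r, _ => r.elim

mutual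
  /-- The Σₙ formulas of the Lévy-style prenex hierarchy. -/
  inductive IsSigmaFml : ℕ → ∀ {k : ℕ}, LSet.BoundedFormula Empty k → Prop
    | of_qf {k} {φ : LSet.BoundedFormula Empty k} : φ.IsQF → IsSigmaFml 0 φ
    | of_pi {n k} {φ : LSet.BoundedFormula Empty k} : IsPiFml n φ → IsSigmaFml (n+1) φ
    | ex {n k} {φ : LSet.BoundedFormula Empty (k+1)} :
        IsSigmaFml (n+1) φ → IsSigmaFml (n+1) φ.ex
  /-- The Πₙ formulas of the Lévy-style prenex hierarchy. -/
  inductive IsPiFml : ℕ → ∀ {k : ℕ}, LSet.BoundedFormula Empty k → Prop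
    | of_qf {k} {φ : LSet.BoundedFormula Empty k} : φ.IsQF → IsPiFml 0 φ
    | of_sigma {n k} {φ : LSet.BoundedFormula Empty k} : IsSigmaFml n φ → IsPiFml (n+1) φ
    | all {n k} {φ : LSet.BoundedFormula Empty (k+1)} :
        IsPiFml (n+1) φ → IsPiFml (n+1) φ.all
end

/-- Satisfaction of a formula (with `k` parameters) in `V`. -/
def SatV {k : ℕ} (φ : LSet.BoundedFormula Empty k) (xs : Fin k → ZFSet) : Prop :=
  φ.Realize (fun e => e.elim) xs

/-- Satisfaction of a formula (with `k` parameters) in a class `S` of sets. -/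
def SatIn (S : Set ZFSet) {k : ℕ} (φ : LSet.BoundedFormula Empty k) (xs : Fin k → S) : Prop :=
  φ.Realize (fun e => e.elim) xs

/-- `S ≼ₙ V` : Σₙ formulas with parameters in `S` are absolute between `S` and `V`. -/
def SigmaElementary (n : ℕ) (S : Set ZFSet) : Prop :=
  ∀ {k : ℕ} (φ : LSet.BoundedFormula Empty k), IsSigmaFml n φ →
    ∀ xs : Fin k → S, (SatIn S φ xs ↔ SatV φ (fun i => (xs i : ZFSet)))

/-- The cumulative hierarchy `V_α`, as the class of sets of rank `< α`. -/
def Vset (α : Ordinal) : Set ZFSet := {x | x.rank < α}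

universe u

/-- `H_κ`: the class of sets hereditarily of cardinality `< κ`. -/
def Hset (κ : Cardinal.{u}) : Set ZFSet.{u} :=
  {x | ∃ t : ZFSet, t.IsTransitive ∧ x ⊆ t ∧ Cardinal.mk t.toSet < Cardinal.lift.{u+1} κ}

/-- The class `C⁽ⁿ⁾ = {α : V_α ≼ₙ V}`. -/
def Cclass (n : ℕ) : Set Ordinal := {α | SigmaElementary n (Vset α)}

/-- `x` is a (von Neumann) ordinal: a transitive set of transitive sets. -/
def ZFOrd (x : ZFSet) : Prop := x.IsTransitive ∧ ∀ y ∈ x, ZFSet.IsTransitive y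

/-- A transitive class of sets. -/
def TransClass (M : Set ZFSet) : Prop := ∀ x ∈ M, ∀ y, y ∈ x → y ∈ M

/-- `j` is an elementary embedding of `V` into the class `M`. -/
structure ElemEmbV (M : Set ZFSet) (j : ZFSet → ZFSet) : Prop where
  maps : ∀ x, j x ∈ M
  elem : ∀ {k : ℕ} (φ : LSet.BoundedFormula Empty k) (xs : Fin k → ZFSet),
    SatV φ xs ↔ SatIn M φ (fun i => ⟨j (xs i), maps (xs i)⟩)

/-- `j` is an elementary embedding of the class `S` into the class `T`. -/
structure ElemEmbBetween (S T : Set ZFSet) (j : ZFSet → ZFSet) : Prop where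
  maps : ∀ x ∈ S, j x ∈ T
  elem : ∀ {k : ℕ} (φ : LSet.BoundedFormula Empty k) (xs : Fin k → ZFSet) (h : ∀ i, xs i ∈ S),
    SatIn S φ (fun i => ⟨xs i, h i⟩) ↔ SatIn T φ (fun i => ⟨j (xs i), maps _ (h i)⟩)

/-- `κ` is the critical point of `j`: `j` fixes all ordinals `< κ` and moves `κ`. -/
def IsCritPt (j : ZFSet → ZFSet) (κ : ZFSet) : Prop :=
  ZFOrd κ ∧ (∀ x, x ∈ κ → j x = x) ∧ j κ ≠ κ

/-- An ultrafilter on (all subsets of) the set `base`. -/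
structure ZFUltra (base : ZFSet) where
  sets : Set ZFSet
  sub : ∀ X ∈ sets, X ⊆ base
  base_mem : base ∈ sets
  empty_not_mem : (∅ : ZFSet) ∉ sets
  upward : ∀ X ∈ sets, ∀ Y, Y ⊆ base → X ⊆ Y → Y ∈ sets
  ultra : ∀ X, X ⊆ base → (X ∈ sets ∨ ZFSet.sep (fun y => y ∉ X) base ∈ sets)

/-- `κ`-completeness: any family of fewer than `|κ|` many members has its
intersection (with the base) in the ultrafilter. -/
def ZFUltra.Complete {b : ZFSet} (κ : ZFSet) (U : ZFUltra b) : Prop :=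
  ∀ F : Set ZFSet, F ⊆ U.sets → Cardinal.mk F < Cardinal.mk κ.toSet →
    ZFSet.sep (fun x => ∀ X ∈ F, x ∈ X) b ∈ U.sets

/-- Nonprincipality: the complement of every singleton is in the ultrafilter. -/
def ZFUltra.Nonprincipal {b : ZFSet} (U : ZFUltra b) : Prop :=
  ∀ x, ZFSet.sep (fun y => y ≠ x) b ∈ U.sets

/-- Normality for an ultrafilter on an ordinal `κ`: closure under diagonal
intersections. -/
def ZFUltra.NormalOn (κ : ZFSet) (U : ZFUltra κ) : Prop :=
  ∀ A : ZFSet → ZFSet, (∀ α ∈ κ, A α ∈ U.sets) →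
    ZFSet.sep (fun α => ∀ β ∈ α, α ∈ A β) κ ∈ U.sets

/-- `P_κ(γ)`: the set of subsets of `γ` of cardinality `< |κ|`. -/
noncomputable def Pkappa (κ γ : ZFSet) : ZFSet :=
  ZFSet.sep (fun x => Cardinal.mk x.toSet < Cardinal.mk κ.toSet) (ZFSet.powerset γ)

/-- Fineness for an ultrafilter on `P_κ(γ)`. -/
def ZFUltra.Fine (κ γ : ZFSet) (U : ZFUltra (Pkappa κ γ)) : Prop :=
  ∀ a ∈ γ, ZFSet.sep (fun x => a ∈ x) (Pkappa κ γ) ∈ U.sets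

/-- Normality for an ultrafilter on `P_κ(γ)`: closure under diagonal intersections. -/
def ZFUltra.NormalP (κ γ : ZFSet) (U : ZFUltra (Pkappa κ γ)) : Prop :=
  ∀ A : ZFSet → ZFSet, (∀ a ∈ γ, A a ∈ U.sets) →
    ZFSet.sep (fun x => ∀ a ∈ x, x ∈ A a) (Pkappa κ γ) ∈ U.sets

/-- `κ` is `γ`-supercompact: there is a `κ`-complete fine normal ultrafilter on `P_κ(γ)`. -/
def GammaSupercompact (κ γ : ZFSet) : Prop :=
  ∃ U : ZFUltra (Pkappa κ γ), U.Complete κ ∧ U.Fine κ γ ∧ U.NormalP κ γ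

/-- `κ` is supercompact. -/
def Supercompact (κ : ZFSet) : Prop :=
  ZFOrd κ ∧ ∀ γ : ZFSet, ZFOrd γ → GammaSupercompact κ γ

/-- `κ` is measurable: it carries a `κ`-complete nonprincipal ultrafilter. -/
def ZFMeasurable (κ : ZFSet) : Prop :=
  ZFOrd κ ∧ ∃ U : ZFUltra κ, U.Complete κ ∧ U.Nonprincipal

/-- `κ` is `λ`-strong. -/
def LambdaStrong (κ : ZFSet) (lam : Ordinal) : Prop :=
  ∃ (M : Set ZFSet) (j : ZFSet → ZFSet), TransClass M ∧ ElemEmbV M j ∧ IsCritPt j κ ∧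
    lam < (j κ).rank ∧ (∀ x, x.rank < lam → x ∈ M)

/-- `κ` is `λ`-`C⁽ⁿ⁾`-strong. -/
def LambdaCnStrong (n : ℕ) (κ : ZFSet) (lam : Ordinal) : Prop :=
  ∃ (M : Set ZFSet) (j : ZFSet → ZFSet), TransClass M ∧ ElemEmbV M j ∧ IsCritPt j κ ∧
    lam < (j κ).rank ∧ (∀ x, x.rank < lam → x ∈ M) ∧ (j κ).rank ∈ Cclass n

/-- `κ` is superstrong. -/
def Superstrong (κ : ZFSet) : Prop :=
  ∃ (M : Set ZFSet) (j : ZFSet → ZFSet), TransClass M ∧ ElemEmbV M j ∧ IsCritPt j κ ∧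
    (∀ x, x.rank < (j κ).rank → x ∈ M)

/-- `κ` is `C⁽ⁿ⁾`-superstrong. -/
def CnSuperstrong (n : ℕ) (κ : ZFSet) : Prop :=
  ∃ (M : Set ZFSet) (j : ZFSet → ZFSet), TransClass M ∧ ElemEmbV M j ∧ IsCritPt j κ ∧
    (∀ x, x.rank < (j κ).rank → x ∈ M) ∧ (j κ).rank ∈ Cclass n

/-- `κ` is `λ`-`C⁽ⁿ⁾`-extendible. -/
def LamCnExtendible (n : ℕ) (κ : ZFSet) (lam : Ordinal) : Prop :=
  ∃ (μ : Ordinal) (j : ZFSet → ZFSet), ElemEmbBetween (Vset lam) (Vset μ) j ∧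
    IsCritPt j κ ∧ lam < (j κ).rank ∧ (j κ).rank ∈ Cclass n

/-- `κ` is `C⁽ⁿ⁾`-extendible. -/
def CnExtendible (n : ℕ) (κ : ZFSet) : Prop :=
  ∀ lam : Ordinal, κ.rank < lam → LamCnExtendible n κ lam

/-- `κ` is extendible. -/
def Extendible (κ : ZFSet) : Prop :=
  ∀ lam : Ordinal, κ.rank < lam →
    ∃ (μ : Ordinal) (j : ZFSet → ZFSet), ElemEmbBetween (Vset lam) (Vset μ) j ∧
      IsCritPt j κ ∧ lam < (j κ).rank

/-!
For `ξ < α`, the statement `∃ b, φ(b) ∧ ξ ∈ b` ("some member of `C` lies above `ξ`") is again Σₙ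
once the atomic conjunct is pushed under the quantifier prefix of `φ`. It holds in `V`, hence in
`V_α` when `α ∈ C⁽ⁿ⁾`, and its witness in `V_α` is in `C` by Σₙ-elementarity once more. So `C ∩ α`
is cofinal in `α`, and `α ∈ C` because `C` is closed.
-/

open FirstOrder Language BoundedFormula

theorem Fin.cons_snoc_comp_castSucc {α : Type*} {k : ℕ} (x : α) (xs : Fin k → α) (a : α) :
    (Fin.cons x (Fin.snoc xs a) : Fin (k + 2) → α) ∘ Fin.castSucc = Fin.cons x xs := by
  rw [Fin.cons_snoc_eq_snoc_cons, Fin.snoc_comp_castSucc]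

mutual

theorem IsSigmaFml.exists_realize_cons_iff_and {n k : ℕ} {φ : LSet.BoundedFormula Empty k}
    (hφ : IsSigmaFml n φ) {χ : LSet.BoundedFormula Empty (k + 1)} (hχ : χ.IsQF) :
    ∃ ψ : LSet.BoundedFormula Empty (k + 1), IsSigmaFml n ψ ∧
      ∀ (M : Type*) [LSet.Structure M] [Nonempty M] (v : Empty → M) (x : M) (xs : Fin k → M),
        ψ.Realize v (Fin.cons x xs) ↔ φ.Realize v xs ∧ χ.Realize v (Fin.cons x xs) := by
  match hφ with
  | .of_qf hqf =>
    refine ⟨φ.liftAt 1 0 ⊓ χ, .of_qf (hqf.liftAt.inf hχ), fun M _ _ v x xs => ?_⟩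
    rw [realize_inf, realize_liftAt_one (Nat.zero_le k)]
    simp
  | .of_pi hpi =>
    obtain ⟨ψ, hψ, hreal⟩ := hpi.exists_realize_cons_iff_and hχ
    exact ⟨ψ, .of_pi hψ, hreal⟩
  | @IsSigmaFml.ex _ _ φ₀ hφ₀ =>
    obtain ⟨ψ, hψ, hreal⟩ := hφ₀.exists_realize_cons_iff_and (hχ.liftAt (k := 1) (m := k + 1))
    refine ⟨ψ.ex, .ex hψ, fun M _ _ v x xs => ?_⟩
    simp only [realize_ex, ← Fin.cons_snoc_eq_snoc_cons, hreal, realize_liftAt_one_self,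
      Fin.cons_snoc_comp_castSucc,
      exists_and_right]

theorem IsPiFml.exists_realize_cons_iff_and {n k : ℕ} {φ : LSet.BoundedFormula Empty k}
    (hφ : IsPiFml n φ) {χ : LSet.BoundedFormula Empty (k + 1)} (hχ : χ.IsQF) :
    ∃ ψ : LSet.BoundedFormula Empty (k + 1), IsPiFml n ψ ∧
      ∀ (M : Type*) [LSet.Structure M] [Nonempty M] (v : Empty → M) (x : M) (xs : Fin k → M),
        ψ.Realize v (Fin.cons x xs) ↔ φ.Realize v xs ∧ χ.Realize v (Fin.cons x xs) := by
  match hφ with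
  | .of_qf hqf =>
    refine ⟨φ.liftAt 1 0 ⊓ χ, .of_qf (hqf.liftAt.inf hχ), fun M _ _ v x xs => ?_⟩
    rw [realize_inf, realize_liftAt_one (Nat.zero_le k)]
    simp
  | .of_sigma hsigma =>
    obtain ⟨ψ, hψ, hreal⟩ := hsigma.exists_realize_cons_iff_and hχ
    exact ⟨ψ, .of_sigma hψ, hreal⟩
  | @IsPiFml.all _ _ φ₀ hφ₀ =>
    obtain ⟨ψ, hψ, hreal⟩ := hφ₀.exists_realize_cons_iff_and (hχ.liftAt (k := 1) (m := k + 1))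
    refine ⟨ψ.all, .all hψ, fun M _ _ v x xs => ?_⟩
    simp only [realize_all, ← Fin.cons_snoc_eq_snoc_cons, hreal, realize_liftAt_one_self,
      Fin.cons_snoc_comp_castSucc,
      forall_and_right]

end

theorem IsSigmaFml.exists_realize_iff_and_mem {n : ℕ} {φ : LSet.BoundedFormula Empty 1}
    (hφ : IsSigmaFml n φ) :
    ∃ θ : LSet.BoundedFormula Empty 2, IsSigmaFml n θ ∧
      ∀ x b : ZFSet, SatV θ ![x, b] ↔ SatV φ ![b] ∧ x ∈ b := by
  obtain ⟨θ, hθ, hreal⟩ := hφ.exists_realize_cons_iff_and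
    (χ := Relations.boundedFormula₂ (L := LSet) () &0 &1) (IsAtomic.rel _ _).isQF
  exact ⟨θ, hθ, fun x b => hreal ZFSet _ x ![b]⟩

theorem SigmaElementary.exists_mem_satV_snoc {m k : ℕ} {S : Set ZFSet}
    (hS : SigmaElementary (m + 1) S) {θ : LSet.BoundedFormula Empty (k + 1)}
    (hθ : IsSigmaFml (m + 1) θ) {xs : Fin k → ZFSet} (hxs : ∀ i, xs i ∈ S) {y : ZFSet}
    (hy : SatV θ (Fin.snoc xs y)) : ∃ z ∈ S, SatV θ (Fin.snoc xs z) := by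
  have hex : SatIn S θ.ex fun i => ⟨xs i, hxs i⟩ :=
    (hS θ.ex hθ.ex _).2 ((realize_ex ..).2 ⟨y, hy⟩)
  obtain ⟨z, hz⟩ := (realize_ex ..).1 hex
  refine ⟨z, z.2, ?_⟩
  have := (hS θ hθ _).1 hz
  rwa [← Function.comp_def Subtype.val, Fin.comp_snoc] at this

theorem zfOrd_toZFSet (o : Ordinal) : ZFOrd o.toZFSet :=
  let h := ZFSet.isOrdinal_toZFSet o
  ⟨h.isTransitive, fun _ hy => (h.mem hy).isTransitive⟩

theorem mem_of_forall_lt_exists_mem_between {ι : Type*} [ConditionallyCompleteLinearOrder ι]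
    {C : Set ι} (hC : ∀ s ⊆ C, s.Nonempty → BddAbove s → sSup s ∈ C) {a : ι}
    (hne : (C ∩ Set.Iio a).Nonempty) (hcof : ∀ ξ < a, ∃ γ ∈ C, ξ < γ ∧ γ < a) : a ∈ C := by
  have hsup : sSup (C ∩ Set.Iio a) = a :=
    csSup_eq_of_forall_le_of_forall_lt_exists_gt hne (fun _ hγ => hγ.2.le) fun ξ hξ =>
      let ⟨γ, hγC, hξγ, hγa⟩ := hcof ξ hξ
      ⟨γ, ⟨hγC, hγa⟩, hξγ⟩
  exact hsup ▸ hC _ Set.inter_subset_left hne ⟨a, fun _ hγ => hγ.2.le⟩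

/-- Every Σₙ-definable (parameter-free) club proper class of ordinals contains `C⁽ⁿ⁾`. -/
theorem stmt4 (n : ℕ) (hn : 1 ≤ n) (C : Set Ordinal)
    (hclosed : ∀ s : Set Ordinal, s ⊆ C → s.Nonempty → BddAbove s → sSup s ∈ C)
    (hunbdd : ∀ α : Ordinal, ∃ β ∈ C, α < β)
    (φ : LSet.BoundedFormula Empty 1) (hφ : IsSigmaFml n φ)
    (hdef : ∀ x : ZFSet, SatV φ ![x] ↔ (ZFOrd x ∧ x.rank ∈ C)) :
    ∀ α ∈ Cclass n, α ∈ C := by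
  obtain ⟨m, rfl⟩ : ∃ m, n = m + 1 := ⟨n - 1, by omega⟩
  intro α hα
  have hφC (β : Ordinal) (hβ : β ∈ C) : SatV φ ![β.toZFSet] :=
    (hdef _).2 ⟨zfOrd_toZFSet β, by rwa [Ordinal.rank_toZFSet]⟩
  obtain ⟨θ, hθ, hθφ⟩ := hφ.exists_realize_iff_and_mem
  have hcof : ∀ ξ < α, ∃ γ ∈ C, ξ < γ ∧ γ < α := by
    intro ξ hξ
    obtain ⟨β, hβC, hξβ⟩ := hunbdd ξ
    have hβ : SatV θ (Fin.snoc ![ξ.toZFSet] β.toZFSet) := by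
      simpa using (hθφ _ _).2 ⟨hφC β hβC, by simpa using hξβ⟩
    obtain ⟨b, hbα, hb⟩ := SigmaElementary.exists_mem_satV_snoc hα hθ
      (by simpa [Vset] using hξ) hβ
    obtain ⟨hbφ, hξb⟩ := (hθφ _ _).1 (by simpa using hb)
    exact ⟨b.rank, ((hdef b).1 hbφ).2, by simpa using ZFSet.rank_lt_of_mem hξb, hbα⟩
  obtain ⟨β, hβC, -⟩ := hunbdd 0
  obtain ⟨b, hbα, -⟩ := SigmaElementary.exists_mem_satV_snoc hα hφ (xs := ![]) nofun
    (by simpa using hφC β hβC)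
  obtain ⟨γ, hγC, -, hγα⟩ := hcof 0 (zero_le.trans_lt hbα)
  exact mem_of_forall_lt_exists_mem_between hclosed ⟨γ, hγC, hγα⟩ hcof
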